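/- Let i_0 be the smallest index with a_{i_0} ≠ 0 in f(u) = Σ_{i=i_0}^p a_i u^i (a_p = 1, f ≡ u^p mod p), and suppose there exists n ≥ 1 with f^{(i)}(π) ≠ 0 for 0 ≤ i ≤ n-1 and f^{(n)}(π) = 0, where f^{(m)} denotes the m-fold composite of f and π is a uniformizer of K. Then for all 0 ≤ j ≤ n-1 one has v_p(f^{(j)}(π)) ≥ (1/e)·Σ_{k=0}^{j} i_0^k, and consequently (1/e)·Σ_{k=0}^{n-1} i_0^k ≤ v_p(a_{i_0}). -/

import Mathlib

/-!
Write `c_j = v (f^[j] π)`. As long as `c_j ≥ 0`, every nonzero term `a_k x^k` of `f(x)`, `x = f^[j] π`,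
has valuation at least `p·c_j` (for `k = p`) or `1 + i₀·c_j` (for `i₀ ≤ k < p`), so
`c_{j+1} ≥ min (p·c_j) (1 + i₀·c_j)`, which drives the lower bound `c_j ≥ (1/e)·Σ_{k ≤ j} i₀^k` by
induction. At the last nonzero iterate `y = f^[n-1] π` we have `f(y) = 0`, so the term `a_{i₀} y^{i₀}`
must cancel the others, all of valuation at least `(i₀ + 1)·v y`; hence `v y ≤ v (a_{i₀})`.
-/

open Finset

section MapMul

variable {K : Type*} [Field K] {v : K → ℝ}

theorem map_one_of_map_mul (hmul : ∀ x y : K, x ≠ 0 → y ≠ 0 → v (x * y) = v x + v y) :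
    v 1 = 0 := by
  have h := hmul 1 1 one_ne_zero one_ne_zero
  rw [mul_one] at h
  linarith

theorem map_pow_of_map_mul (hmul : ∀ x y : K, x ≠ 0 → y ≠ 0 → v (x * y) = v x + v y)
    {x : K} (hx : x ≠ 0) (k : ℕ) : v (x ^ k) = k * v x := by
  induction k with
  | zero => simp [map_one_of_map_mul hmul]
  | succ k ih =>
    rw [pow_succ, hmul _ _ (pow_ne_zero _ hx) hx, ih]
    push_cast
    ring

theorem map_neg_of_map_mul (hmul : ∀ x y : K, x ≠ 0 → y ≠ 0 → v (x * y) = v x + v y)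
    {x : K} (hx : x ≠ 0) : v (-x) = v x := by
  have hm1 : (-1 : K) ≠ 0 := neg_ne_zero.mpr one_ne_zero
  have hv1 : v (-1 : K) = 0 := by
    have h := hmul _ _ hm1 hm1
    rw [neg_mul_neg, one_mul, map_one_of_map_mul hmul] at h
    linarith
  rw [← neg_one_mul, hmul _ _ hm1 hx, hv1, zero_add]

theorem le_map_sum_of_map_add
    (hadd : ∀ x y : K, x ≠ 0 → y ≠ 0 → x + y ≠ 0 → min (v x) (v y) ≤ v (x + y))
    {ι : Type*} [DecidableEq ι] {s : Finset ι} {g : ι → K} {B : ℝ}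
    (h : ∀ i ∈ s, g i = 0 ∨ B ≤ v (g i)) (hs : ∑ i ∈ s, g i ≠ 0) :
    B ≤ v (∑ i ∈ s, g i) := by
  induction s using Finset.induction_on with
  | empty => simp at hs
  | @insert i s hi ih =>
    rw [sum_insert hi] at hs ⊢
    have ih' := fun hs' => ih (fun j hj => h j (mem_insert_of_mem hj)) hs'
    by_cases hgi0 : g i = 0
    · rw [hgi0, zero_add] at hs ⊢
      exact ih' hs
    have hgi := (h i (mem_insert_self i s)).resolve_left hgi0
    by_cases hrest : ∑ j ∈ s, g j = 0
    · rwa [hrest, add_zero]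
    · exact (le_min hgi (ih' hrest)).trans (hadd _ _ hgi0 hrest hs)

end MapMul

section Iterates

variable {K : Type*} [Field K] {v : K → ℝ} {p i₀ : ℕ} {a : ℕ → K}

theorem min_le_map_coeff_mul_pow
    (hmul : ∀ x y : K, x ≠ 0 → y ≠ 0 → v (x * y) = v x + v y)
    (hap : a p = 1) (haint : ∀ i, i < p → a i = 0 ∨ 1 ≤ v (a i))
    {x : K} (hx : x ≠ 0) (hx0 : 0 ≤ v x) {m k : ℕ} (hmk : m ≤ k) (hkp : k ≤ p) :
    a k * x ^ k = 0 ∨ min (p * v x) (1 + m * v x) ≤ v (a k * x ^ k) := by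
  have hmk' : (m : ℝ) * v x ≤ k * v x := by gcongr
  rcases hkp.lt_or_eq with hkp | rfl
  · by_cases hak : a k = 0
    · left
      rw [hak, zero_mul]
    · right
      have hak1 := (haint k hkp).resolve_left hak
      rw [hmul _ _ hak (pow_ne_zero _ hx), map_pow_of_map_mul hmul hx]
      exact (min_le_right _ _).trans (by linarith)
  · right
    rw [hap, one_mul, map_pow_of_map_mul hmul hx]
    exact min_le_left _ _

theorem min_le_map_eval
    (hmul : ∀ x y : K, x ≠ 0 → y ≠ 0 → v (x * y) = v x + v y)
    (hadd : ∀ x y : K, x ≠ 0 → y ≠ 0 → x + y ≠ 0 → min (v x) (v y) ≤ v (x + y))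
    (hap : a p = 1) (haint : ∀ i, i < p → a i = 0 ∨ 1 ≤ v (a i))
    (hlow : ∀ i, i < i₀ → a i = 0)
    {x : K} (hx : x ≠ 0) (hx0 : 0 ≤ v x) (hfx : ∑ k ∈ range (p + 1), a k * x ^ k ≠ 0) :
    min (p * v x) (1 + i₀ * v x) ≤ v (∑ k ∈ range (p + 1), a k * x ^ k) := by
  refine le_map_sum_of_map_add hadd (fun k hk => ?_) hfx
  rcases lt_or_ge k i₀ with hki | hki
  · left
    rw [hlow k hki, zero_mul]
  · exact min_le_map_coeff_mul_pow hmul hap haint hx hx0 hki (Nat.lt_succ_iff.mp (mem_range.mp hk))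

theorem map_le_map_coeff_of_eval_eq_zero
    (hmul : ∀ x y : K, x ≠ 0 → y ≠ 0 → v (x * y) = v x + v y)
    (hadd : ∀ x y : K, x ≠ 0 → y ≠ 0 → x + y ≠ 0 → min (v x) (v y) ≤ v (x + y))
    (hap : a p = 1) (haint : ∀ i, i < p → a i = 0 ∨ 1 ≤ v (a i))
    (hi₀u : i₀ < p) (hlow : ∀ i, i < i₀ → a i = 0) (hi₀ne : a i₀ ≠ 0)
    {y : K} (hy : y ≠ 0) (hy0 : 0 ≤ v y) (hfy : ∑ k ∈ range (p + 1), a k * y ^ k = 0) :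
    v y ≤ v (a i₀) := by
  have hlead : a i₀ * y ^ i₀ = -∑ k ∈ (range (p + 1)).erase i₀, a k * y ^ k := by
    rw [eq_neg_iff_add_eq_zero, add_sum_erase (range (p + 1)) (fun k => a k * y ^ k)
      (mem_range.mpr (by omega)), hfy]
  set rest := ∑ k ∈ (range (p + 1)).erase i₀, a k * y ^ k
  have hlead0 : a i₀ * y ^ i₀ ≠ 0 := mul_ne_zero hi₀ne (pow_ne_zero _ hy)
  have hrest0 : rest ≠ 0 := fun h => hlead0 (by rw [hlead, h, neg_zero])
  have hrest : min (p * v y) (1 + (i₀ + 1 : ℕ) * v y) ≤ v rest := by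
    refine le_map_sum_of_map_add hadd (fun k hk => ?_) hrest0
    obtain ⟨hki, hk⟩ := mem_erase.mp hk
    rcases lt_or_gt_of_ne hki with hki | hki
    · left
      rw [hlow k hki, zero_mul]
    · exact min_le_map_coeff_mul_pow hmul hap haint hy hy0 hki (Nat.lt_succ_iff.mp (mem_range.mp hk))
  have hvlead : v (a i₀) + i₀ * v y = v rest := by
    rw [← map_pow_of_map_mul hmul hy, ← hmul _ _ hi₀ne (pow_ne_zero _ hy), hlead,
      map_neg_of_map_mul hmul hrest0]
  have hp : ((i₀ + 1 : ℕ) : ℝ) * v y ≤ p * v y := by gcongr; omega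
  push_cast at hrest hp
  have hmin := le_min hp (by linarith : ((i₀ : ℝ) + 1) * v y ≤ 1 + (i₀ + 1) * v y)
  linarith

end Iterates

theorem mul_geom_sum_le_of_le_min {c : ℕ → ℝ} {ε q r : ℝ} {N : ℕ} (hε0 : 0 ≤ ε) (hε1 : ε ≤ 1)
    (hr : 0 ≤ r) (hrq : r + 1 ≤ q) (h0 : ε ≤ c 0)
    (hstep : ∀ j < N, 0 ≤ c j → min (q * c j) (1 + r * c j) ≤ c (j + 1)) :
    ∀ j ≤ N, ε * ∑ k ∈ range (j + 1), r ^ k ≤ c j := by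
  intro j hj
  induction j with
  | zero => simpa using h0
  | succ j ih =>
    have hcj := ih (by omega)
    have hgeom : 1 ≤ ∑ k ∈ range (j + 1), r ^ k := by
      rw [geom_sum_succ]
      have := sum_nonneg (fun k (_ : k ∈ range j) => pow_nonneg hr k)
      nlinarith
    have hεc : ε ≤ c j := (le_mul_of_one_le_right hε0 hgeom).trans hcj
    have hrc : r * (ε * ∑ k ∈ range (j + 1), r ^ k) ≤ r * c j := by gcongr
    rw [geom_sum_succ]
    refine le_trans (le_min ?_ ?_) (hstep j (by omega) (hε0.trans hεc))
    · nlinarith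
    · linarith

theorem valuation_growth_of_f_iterates_general
    (p : ℕ)
    (K : Type*) [Field K]
    (v : K → ℝ)
    (hmul : ∀ x y : K, x ≠ 0 → y ≠ 0 → v (x * y) = v x + v y)
    (hadd : ∀ x y : K, x ≠ 0 → y ≠ 0 → x + y ≠ 0 → min (v x) (v y) ≤ v (x + y))
    (e : ℕ)
    (a : ℕ → K) (hap : a p = 1)
    (haint : ∀ i, i < p → a i = 0 ∨ 1 ≤ v (a i))
    (i₀ : ℕ) (hi₀u : i₀ < p)
    (hlow : ∀ i, i < i₀ → a i = 0)
    (hi₀ne : a i₀ ≠ 0)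
    (π : K) (hvπ : v π = 1 / (e : ℝ))
    (n : ℕ) (hn : 1 ≤ n)
    (hnonzero : ∀ i, i < n → (fun x : K => ∑ j ∈ Finset.range (p + 1), a j * x ^ j)^[i] π ≠ 0)
    (hzero : (fun x : K => ∑ j ∈ Finset.range (p + 1), a j * x ^ j)^[n] π = 0) :
    (∀ j, j ≤ n - 1 →
        (1 / (e : ℝ)) * (∑ k ∈ Finset.range (j + 1), (i₀ : ℝ) ^ k) ≤
          v ((fun x : K => ∑ j ∈ Finset.range (p + 1), a j * x ^ j)^[j] π)) ∧
    (1 / (e : ℝ)) * (∑ k ∈ Finset.range n, (i₀ : ℝ) ^ k) ≤ v (a i₀) := by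
  set f := fun x : K => ∑ j ∈ range (p + 1), a j * x ^ j
  have hε0 : (0 : ℝ) ≤ 1 / e := Nat.one_div_cast_nonneg e
  have hε1 : (1 : ℝ) / e ≤ 1 := by simpa only [one_div] using Nat.cast_inv_le_one e
  have hi₀p : (i₀ : ℝ) + 1 ≤ p := by exact_mod_cast hi₀u
  have hlower : ∀ j ≤ n - 1, 1 / (e : ℝ) * ∑ k ∈ range (j + 1), (i₀ : ℝ) ^ k ≤ v (f^[j] π) := by
    refine mul_geom_sum_le_of_le_min hε0 hε1 i₀.cast_nonneg hi₀p hvπ.ge fun j hj hcj => ?_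
    have hfj := hnonzero (j + 1) (by omega)
    rw [Function.iterate_succ_apply'] at hfj ⊢
    exact min_le_map_eval hmul hadd hap haint hlow (hnonzero j (by omega)) hcj hfj
  refine ⟨hlower, ?_⟩
  obtain ⟨m, rfl⟩ := Nat.exists_eq_add_of_le' hn
  have hym := hlower m le_rfl
  have hy0 : 0 ≤ v (f^[m] π) :=
    (mul_nonneg hε0 (sum_nonneg fun k _ => pow_nonneg i₀.cast_nonneg k)).trans hym
  rw [Function.iterate_succ_apply'] at hzero
  exact hym.trans (map_le_map_coeff_of_eval_eq_zero hmul hadd hap haint hi₀u hlow hi₀ne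
    (hnonzero m (by omega)) hy0 hzero)

/-- Let `i₀` be the smallest index with `a_{i₀} ≠ 0` in `f(u) = Σ_{i=i₀}^p a_i u^i`
(`a_p = 1`, `f ≡ u^p mod p`, `f ≠ u^p` so `i₀ < p`), and suppose there exists `n ≥ 1`
with `f^{(i)}(π) ≠ 0` for `0 ≤ i ≤ n-1` and `f^{(n)}(π) = 0`, where `f^{(m)}` is the
`m`-fold composite of `f` and `π` is a uniformizer of `K` (so `v π = 1/e`).  Then for all
`0 ≤ j ≤ n-1` one has `v (f^{(j)}(π)) ≥ (1/e)·Σ_{k=0}^{j} i₀^k`, and consequently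
`(1/e)·Σ_{k=0}^{n-1} i₀^k ≤ v (a i₀)`. -/
theorem valuation_growth_of_f_iterates
    (p : ℕ) (hp : p.Prime)
    (K : Type*) [Field K]
    (v : K → ℝ)
    (hmul : ∀ x y : K, x ≠ 0 → y ≠ 0 → v (x * y) = v x + v y)
    (hadd : ∀ x y : K, x ≠ 0 → y ≠ 0 → x + y ≠ 0 → min (v x) (v y) ≤ v (x + y))
    (hpK : (p : K) ≠ 0)
    (hvp : v (p : K) = 1)
    (e : ℕ) (he : 1 ≤ e)
    (a : ℕ → K) (hap : a p = 1)
    (haint : ∀ i, i < p → a i = 0 ∨ 1 ≤ v (a i))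
    (i₀ : ℕ) (hi₀l : 1 ≤ i₀) (hi₀u : i₀ < p)
    (hlow : ∀ i, i < i₀ → a i = 0)
    (hi₀ne : a i₀ ≠ 0)
    (π : K) (hπne : π ≠ 0) (hvπ : v π = 1 / (e : ℝ))
    (n : ℕ) (hn : 1 ≤ n)
    (hnonzero : ∀ i, i < n → (fun x : K => ∑ j ∈ Finset.range (p + 1), a j * x ^ j)^[i] π ≠ 0)
    (hzero : (fun x : K => ∑ j ∈ Finset.range (p + 1), a j * x ^ j)^[n] π = 0) :
    (∀ j, j ≤ n - 1 →
        (1 / (e : ℝ)) * (∑ k ∈ Finset.range (j + 1), (i₀ : ℝ) ^ k) ≤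
          v ((fun x : K => ∑ j ∈ Finset.range (p + 1), a j * x ^ j)^[j] π)) ∧
    (1 / (e : ℝ)) * (∑ k ∈ Finset.range n, (i₀ : ℝ) ^ k) ≤ v (a i₀) :=
  valuation_growth_of_f_iterates_general p K v hmul hadd e a hap haint i₀ hi₀u hlow hi₀ne π hvπ n hn
    hnonzero hzero
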